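/- Let 𝕂 be a field with a discrete valuation ν₁ : 𝕂× → ℤ whose residue field K carries a discrete valuation ν₂ : K× → ℤ. For f, g ∈ 𝕂×, define ν_𝕂(f,g) := ν₂ of the residue class of f^(ν₁(g))·g^(-ν₁(f)). Then ν_𝕂 : 𝕂× × 𝕂× → ℤ is bimultiplicative: ν_𝕂(f₁f₂, g) = ν_𝕂(f₁,g) + ν_𝕂(f₂,g). -/

import Mathlib

/-- An abstract (additive, surjective) discrete valuation on a field `K`:
`ν : K → ℤ` with `ν 0 = 0` by convention, multiplicative on nonzero elements,
satisfying the ultrametric inequality, and surjective onto `ℤ`. -/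
structure DiscreteValuationOn (K : Type*) [Field K] where
  ν : K → ℤ
  ν_zero : ν 0 = 0
  ν_mul : ∀ {x y : K}, x ≠ 0 → y ≠ 0 → ν (x * y) = ν x + ν y
  ν_add : ∀ {x y : K}, x ≠ 0 → y ≠ 0 → x + y ≠ 0 → min (ν x) (ν y) ≤ ν (x + y)
  surj : ∀ n : ℤ, ∃ x : K, x ≠ 0 ∧ ν x = n

namespace DiscreteValuationOn

variable {K : Type*} [Field K] (v : DiscreteValuationOn K)

lemma ν_one : v.ν 1 = 0 := by
  have h := v.ν_mul (x := (1 : K)) one_ne_zero one_ne_zero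
  rw [mul_one] at h
  omega

lemma ν_neg_one : v.ν (-1 : K) = 0 := by
  have h := v.ν_mul (x := (-1 : K)) (y := (-1 : K))
    (neg_ne_zero.mpr one_ne_zero) (neg_ne_zero.mpr one_ne_zero)
  rw [neg_mul_neg, one_mul, v.ν_one] at h
  omega

lemma ν_neg (x : K) : v.ν (-x) = v.ν x := by
  rcases eq_or_ne x 0 with rfl | hx
  · rw [neg_zero]
  · have h := v.ν_mul (x := (-1 : K)) (y := x) (neg_ne_zero.mpr one_ne_zero) hx
    rw [neg_one_mul] at h
    rw [h, v.ν_neg_one, zero_add]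

/-- The valuation ring of `v`. -/
def O : Subring K where
  carrier := {x : K | x = 0 ∨ 0 ≤ v.ν x}
  zero_mem' := Or.inl rfl
  one_mem' := Or.inr (le_of_eq v.ν_one.symm)
  mul_mem' := by
    intro x y hx hy
    rcases eq_or_ne x 0 with rfl | hx0
    · exact Or.inl (zero_mul _)
    rcases eq_or_ne y 0 with rfl | hy0
    · exact Or.inl (mul_zero _)
    rcases hx with rfl | hx
    · exact absurd rfl hx0
    rcases hy with rfl | hy
    · exact absurd rfl hy0
    refine Or.inr ?_
    rw [v.ν_mul hx0 hy0]
    omega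
  add_mem' := by
    intro x y hx hy
    rcases eq_or_ne x 0 with rfl | hx0
    · simpa using hy
    rcases eq_or_ne y 0 with rfl | hy0
    · simpa using hx
    rcases eq_or_ne (x + y) 0 with h0 | h0
    · exact Or.inl h0
    rcases hx with rfl | hx
    · exact absurd rfl hx0
    rcases hy with rfl | hy
    · exact absurd rfl hy0
    have := v.ν_add hx0 hy0 h0
    refine Or.inr ?_
    omega
  neg_mem' := by
    intro x hx
    rcases hx with rfl | hx
    · exact Or.inl neg_zero
    · exact Or.inr (by rw [v.ν_neg]; exact hx)

lemma mem_O_iff {x : K} : x ∈ v.O ↔ x = 0 ∨ 0 ≤ v.ν x := Iff.rfl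

/-- The maximal ideal of the valuation ring. -/
def m : Ideal v.O where
  carrier := {x : v.O | (x : K) = 0 ∨ 0 < v.ν (x : K)}
  zero_mem' := Or.inl rfl
  add_mem' := by
    intro a b ha hb
    have hco : ((a + b : v.O) : K) = (a : K) + (b : K) := rfl
    simp only [Set.mem_setOf_eq, hco] at *
    rcases eq_or_ne ((a : K)) 0 with h0a | h0a
    · rw [h0a, zero_add]; exact hb
    rcases eq_or_ne ((b : K)) 0 with h0b | h0b
    · rw [h0b, add_zero]; exact ha
    rcases eq_or_ne ((a : K) + (b : K)) 0 with h0 | h0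
    · exact Or.inl h0
    rcases ha with h | ha
    · exact absurd h h0a
    rcases hb with h | hb
    · exact absurd h h0b
    have := v.ν_add h0a h0b h0
    exact Or.inr (by omega)
  smul_mem' := by
    intro c x hx
    have hco : ((c • x : v.O) : K) = (c : K) * (x : K) := rfl
    simp only [Set.mem_setOf_eq, hco] at *
    rcases eq_or_ne ((c : K)) 0 with h0c | h0c
    · exact Or.inl (by rw [h0c, zero_mul])
    rcases eq_or_ne ((x : K)) 0 with h0x | h0x
    · exact Or.inl (by rw [h0x, mul_zero])
    rcases hx with h | hx
    · exact absurd h h0x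
    rcases (v.mem_O_iff.mp c.2) with h | hc
    · exact absurd h h0c
    rw [v.ν_mul h0c h0x]
    exact Or.inr (by omega)

/-- Residue map `K → O/m`, sending elements outside `O` to `0`. -/
noncomputable def res (x : K) : v.O ⧸ v.m := by
  classical exact if h : x ∈ v.O then Ideal.Quotient.mk v.m ⟨x, h⟩ else 0

/-- The one-dimensional tame symbol
`{f,g} = residue of (-1)^(ν f · ν g) · f^(ν g) · g^(-ν f)`. -/
noncomputable def tame (f g : K) : v.O ⧸ v.m :=
  v.res ((-1 : K) ^ (v.ν f * v.ν g) * f ^ (v.ν g) * g ^ (-(v.ν f)))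

end DiscreteValuationOn

section TwoDimensional

variable {𝕂 K : Type*} [Field 𝕂] [Field K]

/-- The residue map `𝕂 → K` induced by a ring hom `ρ : O_𝕂 → K` on the valuation
ring (junk value `0` outside `O_𝕂`). -/
noncomputable def DiscreteValuationOn.resVia (v₁ : DiscreteValuationOn 𝕂)
    (ρ : v₁.O →+* K) (x : 𝕂) : K := by
  classical exact if h : x ∈ v₁.O then ρ ⟨x, h⟩ else 0

/-- `ν_𝕂(f,g) := ν₂( residue of f^(ν₁ g) · g^(-ν₁ f) )`. -/
noncomputable def nuK (v₁ : DiscreteValuationOn 𝕂) (ρ : v₁.O →+* K)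
    (v₂ : DiscreteValuationOn K) (f g : 𝕂) : ℤ :=
  v₂.ν (v₁.resVia ρ (f ^ (v₁.ν g) * g ^ (-(v₁.ν f))))

end TwoDimensional

/-! The element `u(f, g) = f ^ ν₁ g * g ^ (-ν₁ f)` has `ν₁`-valuation `0`, so it is a unit of `O_𝕂`
and its residue is nonzero. Since `ν₁` is additive, `u(f₁ f₂, g) = u(f₁, g) * u(f₂, g)`; the residue
map is multiplicative on `O_𝕂`, and `ν₂` is additive on `K×`. -/

namespace DiscreteValuationOn

section Valuation

variable {K : Type*} [Field K] (v : DiscreteValuationOn K)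

lemma ν_inv {x : K} (hx : x ≠ 0) : v.ν x⁻¹ = -v.ν x := by
  have h := v.ν_mul hx (inv_ne_zero hx)
  rw [mul_inv_cancel₀ hx, v.ν_one] at h
  omega

lemma ν_pow {x : K} (hx : x ≠ 0) (n : ℕ) : v.ν (x ^ n) = n * v.ν x := by
  induction n with
  | zero => simp [v.ν_one]
  | succ k ih =>
    rw [pow_succ, v.ν_mul (pow_ne_zero _ hx) hx, ih]
    push_cast
    ring

lemma ν_zpow {x : K} (hx : x ≠ 0) (n : ℤ) : v.ν (x ^ n) = n * v.ν x := by
  rcases n with n | n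
  · simpa using v.ν_pow hx n
  · rw [zpow_negSucc, v.ν_inv (pow_ne_zero _ hx), v.ν_pow hx, Int.negSucc_eq]
    push_cast
    ring

lemma mem_O_of_ν_eq_zero {x : K} (hx : v.ν x = 0) : x ∈ v.O :=
  Or.inr hx.ge

def unitSymbol (f g : K) : K :=
  f ^ v.ν g * g ^ (-v.ν f)

lemma unitSymbol_ne_zero {f g : K} (hf : f ≠ 0) (hg : g ≠ 0) : v.unitSymbol f g ≠ 0 :=
  mul_ne_zero (zpow_ne_zero _ hf) (zpow_ne_zero _ hg)

lemma ν_unitSymbol {f g : K} (hf : f ≠ 0) (hg : g ≠ 0) : v.ν (v.unitSymbol f g) = 0 := by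
  rw [unitSymbol, v.ν_mul (zpow_ne_zero _ hf) (zpow_ne_zero _ hg), v.ν_zpow hf, v.ν_zpow hg]
  ring

lemma unitSymbol_mul_left {f₁ f₂ g : K} (hf₁ : f₁ ≠ 0) (hf₂ : f₂ ≠ 0) (hg : g ≠ 0) :
    v.unitSymbol (f₁ * f₂) g = v.unitSymbol f₁ g * v.unitSymbol f₂ g := by
  rw [unitSymbol, unitSymbol, unitSymbol, v.ν_mul hf₁ hf₂, mul_zpow, neg_add, zpow_add₀ hg]
  ring

end Valuation

section Residue

variable {𝕂 K : Type*} [Field 𝕂] [Field K] (v : DiscreteValuationOn 𝕂) (ρ : v.O →+* K)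

lemma resVia_of_mem {x : 𝕂} (hx : x ∈ v.O) : v.resVia ρ x = ρ ⟨x, hx⟩ :=
  dif_pos hx

lemma resVia_mul {x y : 𝕂} (hx : x ∈ v.O) (hy : y ∈ v.O) :
    v.resVia ρ (x * y) = v.resVia ρ x * v.resVia ρ y := by
  rw [v.resVia_of_mem ρ (v.O.mul_mem hx hy), v.resVia_of_mem ρ hx, v.resVia_of_mem ρ hy,
    ← map_mul]
  rfl

lemma resVia_ne_zero_of_ν_eq_zero {x : 𝕂} (hx : x ≠ 0) (hν : v.ν x = 0) :
    v.resVia ρ x ≠ 0 := by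
  have hinv : v.ν x⁻¹ = 0 := by rw [v.ν_inv hx, hν, neg_zero]
  have hunit : ρ ⟨x, v.mem_O_of_ν_eq_zero hν⟩ * ρ ⟨x⁻¹, v.mem_O_of_ν_eq_zero hinv⟩ = 1 := by
    rw [← map_mul, ← map_one ρ]
    congr 1
    exact Subtype.ext (mul_inv_cancel₀ hx)
  rw [v.resVia_of_mem ρ (v.mem_O_of_ν_eq_zero hν)]
  exact left_ne_zero_of_mul_eq_one hunit

end Residue

end DiscreteValuationOn

lemma nuK_eq_ν_resVia_unitSymbol {𝕂 K : Type*} [Field 𝕂] [Field K] (v₁ : DiscreteValuationOn 𝕂)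
    (ρ : v₁.O →+* K) (v₂ : DiscreteValuationOn K) (f g : 𝕂) :
    nuK v₁ ρ v₂ f g = v₂.ν (v₁.resVia ρ (v₁.unitSymbol f g)) :=
  rfl

theorem nuK_bimultiplicative_general {𝕂 K : Type*} [Field 𝕂] [Field K]
    (v₁ : DiscreteValuationOn 𝕂) (ρ : v₁.O →+* K)
    (v₂ : DiscreteValuationOn K)
    (f₁ f₂ g : 𝕂) (hf₁ : f₁ ≠ 0) (hf₂ : f₂ ≠ 0) (hg : g ≠ 0) :
    nuK v₁ ρ v₂ (f₁ * f₂) g = nuK v₁ ρ v₂ f₁ g + nuK v₁ ρ v₂ f₂ g := by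
  have hres_ne {f : 𝕂} (hf : f ≠ 0) : v₁.resVia ρ (v₁.unitSymbol f g) ≠ 0 :=
    v₁.resVia_ne_zero_of_ν_eq_zero ρ (v₁.unitSymbol_ne_zero hf hg) (v₁.ν_unitSymbol hf hg)
  simp only [nuK_eq_ν_resVia_unitSymbol]
  rw [v₁.unitSymbol_mul_left hf₁ hf₂ hg,
    v₁.resVia_mul ρ (v₁.mem_O_of_ν_eq_zero (v₁.ν_unitSymbol hf₁ hg))
      (v₁.mem_O_of_ν_eq_zero (v₁.ν_unitSymbol hf₂ hg)),
    v₂.ν_mul (hres_ne hf₁) (hres_ne hf₂)]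

/-- the map `ν_𝕂` is bimultiplicative:
`ν_𝕂(f₁f₂, g) = ν_𝕂(f₁,g) + ν_𝕂(f₂,g)`. Here `K` is the residue field of `𝕂`,
presented by a surjective ring hom `ρ : O_𝕂 → K` with kernel the maximal ideal. -/
theorem nuK_bimultiplicative {𝕂 K : Type*} [Field 𝕂] [Field K]
    (v₁ : DiscreteValuationOn 𝕂) (ρ : v₁.O →+* K)
    (hρ : Function.Surjective ρ) (hker : RingHom.ker ρ = v₁.m)
    (v₂ : DiscreteValuationOn K)
    (f₁ f₂ g : 𝕂) (hf₁ : f₁ ≠ 0) (hf₂ : f₂ ≠ 0) (hg : g ≠ 0) :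
    nuK v₁ ρ v₂ (f₁ * f₂) g = nuK v₁ ρ v₂ f₁ g + nuK v₁ ρ v₂ f₂ g :=
  nuK_bimultiplicative_general v₁ ρ v₂ f₁ f₂ g hf₁ hf₂ hg
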